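/- A priori bounds used in the proof of Theorem 3.1: Let n ≥ 1, let Γ be a subgroup of the isometry group of Euclidean space ℝⁿ whose orbit space ℝⁿ/Γ is compact, and let 0 < S ≤ ∞. Let v : [0,S) × ℝⁿ → ℝ be continuous on [0,S) × ℝⁿ, infinitely differentiable on (0,S) × ℝⁿ, everywhere positive, Γ-periodic in the spatial variable for every s, and solve ∂v/∂s = v⁻² Δv − 2 v⁻³ |∇v|² on (0,S) × ℝⁿ. Then for every s ∈ [0,S) and every x ∈ ℝⁿ one has 0 < inf_{y∈ℝⁿ} v(0,y) ≤ v(s,x) ≤ sup_{y∈ℝⁿ} v(0,y). -/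

import Mathlib

/-!
At a spatial maximum of `v(s, ·)` the Laplacian is nonpositive, and the gradient term of the
equation has the right sign because `v > 0`, so `∂ₛv ≤ 0` there; at a spatial minimum the
gradient vanishes and `∂ₛv ≥ 0`. Since `ℝⁿ/Γ` is compact, some compact set `K` meets every
orbit, so the maximum of the periodic function `v(s, x) - εs` over `[0, T] × ℝⁿ` is attained on
`[0, T] × K`. It cannot sit at a positive time, where `∂ₛ(v - εs) ≤ -ε < 0`, which gives
`v(T, ·) ≤ sup v(0, ·) + εT`; the lower bound is symmetric.
-/

open scoped RealInnerProductSpace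

noncomputable section

/-- The Euclidean Laplacian: the sum of the second partial derivatives. -/
def lap {n : ℕ} (f : EuclideanSpace ℝ (Fin n) → ℝ) (x : EuclideanSpace ℝ (Fin n)) : ℝ :=
  ∑ i : Fin n,
    fderiv ℝ (fun y => fderiv ℝ f y (EuclideanSpace.single i 1)) x (EuclideanSpace.single i 1)

/-- The natural action of the isometry group of Euclidean space on Euclidean space. -/
instance isomAction {n : ℕ} :
    MulAction (EuclideanSpace ℝ (Fin n) ≃ᵢ EuclideanSpace ℝ (Fin n))
      (EuclideanSpace ℝ (Fin n)) where
  smul g x := g x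
  one_smul _ := rfl
  mul_smul _ _ _ := rfl

open Filter Set Topology

section OrbitSpace

theorem IsOpenMap.exists_isCompact_image_eq_univ {X Y : Type*} [TopologicalSpace X]
    [WeaklyLocallyCompactSpace X] [TopologicalSpace Y] [CompactSpace Y] {f : X → Y}
    (hf : IsOpenMap f) (hsurj : Function.Surjective f) :
    ∃ K : Set X, IsCompact K ∧ f '' K = univ := by
  choose s hs hsx using fun x : X => exists_compact_mem_nhds x
  obtain ⟨t, ht⟩ := CompactSpace.elim_nhds_subcover (fun y => f '' s (Function.surjInv hsurj y))
    fun y => by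
      simpa only [Function.surjInv_eq hsurj y] using
        hf.image_mem_nhds (hsx (Function.surjInv hsurj y))
  refine ⟨⋃ y ∈ t, s (Function.surjInv hsurj y), t.isCompact_biUnion fun y _ => hs _, ?_⟩
  rw [image_iUnion₂]
  exact ht

variable {G X : Type*} [Group G] [MulAction G X] [TopologicalSpace X]
  [CompactSpace (Quotient (MulAction.orbitRel G X))]

theorem MulAction.exists_isCompact_forall_exists_smul_mem [WeaklyLocallyCompactSpace X]
    [ContinuousConstSMul G X] : ∃ K : Set X, IsCompact K ∧ ∀ x : X, ∃ g : G, g • x ∈ K := by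
  obtain ⟨K, hK, hKQ⟩ :=
    (isOpenMap_quotient_mk'_mul (Γ := G) (T := X)).exists_isCompact_image_eq_univ
      (Quotient.mk'_surjective (s := orbitRel G X))
  refine ⟨K, hK, fun x => ?_⟩
  obtain ⟨y, hyK, hyx⟩ := hKQ.symm.subset (mem_univ (Quotient.mk (orbitRel G X) x))
  obtain ⟨g, rfl⟩ := Quotient.exact hyx
  exact ⟨g, hyK⟩

theorem MulAction.isCompact_range_of_smul_invariant {Y : Type*} [TopologicalSpace Y] {f : X → Y}
    (hf : Continuous f) (hinv : ∀ (g : G) (x : X), f (g • x) = f x) : IsCompact (range f) := by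
  have hlift : ∀ x y, orbitRel G X x y → f x = f y := fun _ y ⟨g, hg⟩ => hg ▸ hinv g y
  rw [← range_quotient_lift (s := orbitRel G X) hlift]
  exact isCompact_range (X := Quotient (orbitRel G X)) (continuous_quot_lift _ hf)

end OrbitSpace

instance {n : ℕ} (Γ : Subgroup (EuclideanSpace ℝ (Fin n) ≃ᵢ EuclideanSpace ℝ (Fin n))) :
    ContinuousConstSMul Γ (EuclideanSpace ℝ (Fin n)) :=
  ⟨fun g => (g : EuclideanSpace ℝ (Fin n) ≃ᵢ EuclideanSpace ℝ (Fin n)).continuous⟩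

section SecondDerivative

theorem IsLocalMax.deriv_deriv_nonpos {g : ℝ → ℝ} {a : ℝ} (h : IsLocalMax g a)
    (hc : ContinuousAt g a) : deriv (deriv g) a ≤ 0 := by
  by_contra! hpos
  -- the second derivative test would make `a` a local minimum too, so `g` would be locally constant
  have hmin := isLocalMin_of_deriv_deriv_pos hpos h.deriv_eq_zero hc
  have hconst : g =ᶠ[𝓝 a] fun _ => g a := (h.and hmin).mono fun t ht => le_antisymm ht.1 ht.2
  have hzero : deriv (deriv g) a = 0 := by simpa only [deriv_const'] using hconst.deriv.deriv_eq
  exact hpos.ne' hzero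

theorem IsLocalMin.deriv_deriv_nonneg {g : ℝ → ℝ} {a : ℝ} (h : IsLocalMin g a)
    (hc : ContinuousAt g a) : 0 ≤ deriv (deriv g) a := by
  simpa [deriv.neg'] using h.neg.deriv_deriv_nonpos hc.neg

variable {E : Type*} [NormedAddCommGroup E] [NormedSpace ℝ E]

theorem hasDerivAt_comp_add_smul {F : Type*} [NormedAddCommGroup F] [NormedSpace ℝ F]
    {φ : E → F} {x e : E} {t : ℝ} (hφ : DifferentiableAt ℝ φ (x + t • e)) :
    HasDerivAt (fun s : ℝ => φ (x + s • e)) (fderiv ℝ φ (x + t • e) e) t := by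
  have hline : HasDerivAt (fun s : ℝ => x + s • e) e t := by
    simpa using ((hasDerivAt_id t).smul_const e).const_add x
  exact hφ.hasFDerivAt.comp_hasDerivAt t hline

theorem deriv_deriv_comp_add_smul {f : E → ℝ} (hf : ContDiff ℝ 2 f) (x e : E) :
    deriv (deriv fun t : ℝ => f (x + t • e)) 0 = fderiv ℝ (fun y => fderiv ℝ f y e) x e := by
  have hderiv : (deriv fun t : ℝ => f (x + t • e)) = fun t => fderiv ℝ f (x + t • e) e :=
    funext fun t => (hasDerivAt_comp_add_smul (hf.differentiable (by norm_num) _)).deriv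
  have hdf : Differentiable ℝ (fun y => fderiv ℝ f y e) :=
    ((hf.fderiv_right (m := 1) le_rfl).clm_apply contDiff_const).differentiable one_ne_zero
  rw [hderiv]
  simpa using (hasDerivAt_comp_add_smul (hdf (x + (0 : ℝ) • e))).deriv

theorem IsLocalMax.fderiv_fderiv_apply_nonpos {f : E → ℝ} {x : E} (h : IsLocalMax f x)
    (hf : ContDiff ℝ 2 f) (e : E) : fderiv ℝ (fun y => fderiv ℝ f y e) x e ≤ 0 := by
  rw [← deriv_deriv_comp_add_smul hf]
  refine IsLocalMax.deriv_deriv_nonpos ?_ (hf.continuous.comp (by fun_prop)).continuousAt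
  exact IsLocalMax.comp_continuous (g := fun t : ℝ => x + t • e) (by simpa using h) (by fun_prop)

theorem IsLocalMin.fderiv_fderiv_apply_nonneg {f : E → ℝ} {x : E} (h : IsLocalMin f x)
    (hf : ContDiff ℝ 2 f) (e : E) : 0 ≤ fderiv ℝ (fun y => fderiv ℝ f y e) x e := by
  rw [← deriv_deriv_comp_add_smul hf]
  refine IsLocalMin.deriv_deriv_nonneg ?_ (hf.continuous.comp (by fun_prop)).continuousAt
  exact IsLocalMin.comp_continuous (g := fun t : ℝ => x + t • e) (by simpa using h) (by fun_prop)

end SecondDerivative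

/-- `∇ · (f⁻² ∇f)`, expanded. -/
def divInvSqGrad {n : ℕ} (f : EuclideanSpace ℝ (Fin n) → ℝ) (x : EuclideanSpace ℝ (Fin n)) : ℝ :=
  lap f x / f x ^ 2 - 2 * ‖gradient f x‖ ^ 2 / f x ^ 3

section Laplacian

variable {n : ℕ} {f : EuclideanSpace ℝ (Fin n) → ℝ} {x : EuclideanSpace ℝ (Fin n)}

theorem IsLocalMax.lap_nonpos (h : IsLocalMax f x) (hf : ContDiff ℝ 2 f) : lap f x ≤ 0 :=
  Finset.sum_nonpos fun _ _ => h.fderiv_fderiv_apply_nonpos hf _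

theorem IsLocalMin.lap_nonneg (h : IsLocalMin f x) (hf : ContDiff ℝ 2 f) : 0 ≤ lap f x :=
  Finset.sum_nonneg fun _ _ => h.fderiv_fderiv_apply_nonneg hf _

theorem IsLocalMax.divInvSqGrad_nonpos (h : IsLocalMax f x) (hf : ContDiff ℝ 2 f)
    (hx : 0 < f x) : divInvSqGrad f x ≤ 0 := by
  have hlap : lap f x / f x ^ 2 ≤ 0 :=
    div_nonpos_of_nonpos_of_nonneg (h.lap_nonpos hf) (by positivity)
  have hgrad : 0 ≤ 2 * ‖gradient f x‖ ^ 2 / f x ^ 3 := by positivity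
  unfold divInvSqGrad
  linarith

theorem IsLocalMin.divInvSqGrad_nonneg (h : IsLocalMin f x) (hf : ContDiff ℝ 2 f) :
    0 ≤ divInvSqGrad f x := by
  have hgrad : gradient f x = 0 := by simp [gradient, h.fderiv_eq_zero]
  simpa [divInvSqGrad, hgrad] using div_nonneg (h.lap_nonneg hf) (sq_nonneg (f x))

end Laplacian

section Slices

variable {𝕜 E F : Type*} [NontriviallyNormedField 𝕜] [NormedAddCommGroup E] [NormedSpace 𝕜 E]
  [NormedAddCommGroup F] [NormedSpace 𝕜 F] {f : 𝕜 × E → F} {U : Set (𝕜 × E)} {k : WithTop ℕ∞}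

theorem ContDiffOn.contDiff_comp_mk_left (hf : ContDiffOn 𝕜 k f U) {t : 𝕜}
    (ht : ∀ x, (t, x) ∈ U) : ContDiff 𝕜 k fun x => f (t, x) :=
  contDiffOn_univ.1 <| hf.comp (contDiff_const.prodMk contDiff_id).contDiffOn fun x _ => ht x

theorem ContDiffOn.differentiableAt_comp_mk_right (hf : ContDiffOn 𝕜 k f U) (hk : k ≠ 0)
    {t : 𝕜} {x : E} (hU : U ∈ 𝓝 (t, x)) : DifferentiableAt 𝕜 (fun s => f (s, x)) t :=
  ((hf.contDiffAt hU).comp t (contDiff_id.prodMk contDiff_const).contDiffAt).differentiableAt hk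

end Slices

section MaximumPrinciple

theorem IsMaxOn.hasDerivAt_nonneg_of_Icc {f : ℝ → ℝ} {a b f' : ℝ} (hab : a < b)
    (hmax : IsMaxOn f (Icc a b) b) (hf : HasDerivAt f f' b) : 0 ≤ f' := by
  have hcone : a - b ∈ posTangentConeAt (Icc a b) b :=
    mem_posTangentConeAt_of_segment_subset <| by
      rw [add_sub_cancel, segment_symm, segment_eq_Icc hab.le]
  have := hmax.localize.hasFDerivWithinAt_nonpos hf.hasFDerivAt.hasFDerivWithinAt hcone
  simp only [ContinuousLinearMap.toSpanSingleton_apply, smul_eq_mul] at this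
  exact nonneg_of_mul_nonpos_right this (sub_neg.2 hab)

variable {X : Type*} [TopologicalSpace X] {u : ℝ → X → ℝ} {T : ℝ}

theorem le_add_mul_of_deriv_nonpos_at_spatial_max {K : Set X} (hK : IsCompact K)
    (hcont : ContinuousOn (fun p : ℝ × X => u p.1 p.2) (Icc 0 T ×ˢ K))
    (hrep : ∀ x, ∃ y ∈ K, ∀ s ∈ Icc 0 T, u s y = u s x)
    (hdiff : ∀ s ∈ Ioc 0 T, ∀ x, DifferentiableAt ℝ (fun t => u t x) s)
    (hderiv : ∀ s ∈ Ioc 0 T, ∀ x, (∀ y, u s y ≤ u s x) → deriv (fun t => u t x) s ≤ 0)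
    {M : ℝ} (hM : ∀ x, u 0 x ≤ M) (hT : 0 ≤ T) {ε : ℝ} (hε : 0 < ε) (x : X) :
    u T x ≤ M + ε * T := by
  obtain ⟨y, hyK, -⟩ := hrep x
  obtain ⟨⟨s₀, x₀⟩, ⟨hs₀, -⟩, hmax⟩ := (isCompact_Icc.prod hK).exists_isMaxOn
    ⟨(0, y), left_mem_Icc.2 hT, hyK⟩ (hcont.sub (continuousOn_const.mul continuousOn_fst))
  have hglob : ∀ s ∈ Icc 0 T, ∀ x, u s x - ε * s ≤ u s₀ x₀ - ε * s₀ := by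
    intro s hs x
    obtain ⟨y, hyK, hy⟩ := hrep x
    rw [← hy s hs]
    exact hmax (mk_mem_prod hs hyK)
  rcases hs₀.1.eq_or_lt with rfl | hs₀pos
  · linarith [hglob T (right_mem_Icc.2 hT) x, hM x₀]
  · have hs₀' : s₀ ∈ Ioc 0 T := ⟨hs₀pos, hs₀.2⟩
    have hspace : ∀ y, u s₀ y ≤ u s₀ x₀ := fun y => by linarith [hglob s₀ hs₀ y]
    have htime : IsMaxOn (fun t => u t x₀ - ε * t) (Icc 0 s₀) s₀ :=
      fun t ht => hglob t ⟨ht.1, ht.2.trans hs₀.2⟩ x₀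
    have := htime.hasDerivAt_nonneg_of_Icc hs₀pos
      ((hdiff s₀ hs₀' x₀).hasDerivAt.sub ((hasDerivAt_id s₀).const_mul ε))
    linarith [hderiv s₀ hs₀' x₀ hspace]

variable {G : Type*} [Group G] [MulAction G X] [ContinuousConstSMul G X]
  [WeaklyLocallyCompactSpace X] [CompactSpace (Quotient (MulAction.orbitRel G X))]

theorem le_of_deriv_nonpos_at_spatial_max
    (hcont : ContinuousOn (fun p : ℝ × X => u p.1 p.2) (Icc 0 T ×ˢ univ))
    (hinv : ∀ s ∈ Icc 0 T, ∀ (g : G) x, u s (g • x) = u s x)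
    (hdiff : ∀ s ∈ Ioc 0 T, ∀ x, DifferentiableAt ℝ (fun t => u t x) s)
    (hderiv : ∀ s ∈ Ioc 0 T, ∀ x, (∀ y, u s y ≤ u s x) → deriv (fun t => u t x) s ≤ 0)
    {M : ℝ} (hM : ∀ x, u 0 x ≤ M) (hT : 0 ≤ T) (x : X) : u T x ≤ M := by
  obtain ⟨K, hK, hKG⟩ := MulAction.exists_isCompact_forall_exists_smul_mem (G := G) (X := X)
  have hrep : ∀ x, ∃ y ∈ K, ∀ s ∈ Icc 0 T, u s y = u s x := fun x =>
    let ⟨g, hg⟩ := hKG x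
    ⟨g • x, hg, fun s hs => hinv s hs g x⟩
  refine le_of_forall_pos_le_add fun δ hδ => ?_
  calc u T x ≤ M + δ / (T + 1) * T :=
        le_add_mul_of_deriv_nonpos_at_spatial_max hK
          (hcont.mono (prod_mono subset_rfl (subset_univ K))) hrep hdiff hderiv hM hT
          (by positivity) x
    _ ≤ M + δ := by
        gcongr
        rw [div_mul_eq_mul_div, div_le_iff₀ (by positivity)]
        nlinarith

theorem le_of_deriv_nonneg_at_spatial_min
    (hcont : ContinuousOn (fun p : ℝ × X => u p.1 p.2) (Icc 0 T ×ˢ univ))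
    (hinv : ∀ s ∈ Icc 0 T, ∀ (g : G) x, u s (g • x) = u s x)
    (hdiff : ∀ s ∈ Ioc 0 T, ∀ x, DifferentiableAt ℝ (fun t => u t x) s)
    (hderiv : ∀ s ∈ Ioc 0 T, ∀ x, (∀ y, u s x ≤ u s y) → 0 ≤ deriv (fun t => u t x) s)
    {m : ℝ} (hm : ∀ x, m ≤ u 0 x) (hT : 0 ≤ T) (x : X) : m ≤ u T x := by
  have := le_of_deriv_nonpos_at_spatial_max (u := fun s x => -u s x) (M := -m) hcont.neg
    (fun s hs g x => congrArg Neg.neg (hinv s hs g x)) (fun s hs x => (hdiff s hs x).neg)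
    (fun s hs x hx => by
      rw [deriv.fun_neg]
      linarith [hderiv s hs x fun y => neg_le_neg_iff.1 (hx y)])
    (fun x => neg_le_neg (hm x)) hT x
  linarith

end MaximumPrinciple

theorem a_priori_bounds_general (n : ℕ)
    (Γ : Subgroup (EuclideanSpace ℝ (Fin n) ≃ᵢ EuclideanSpace ℝ (Fin n)))
    (hΓ : CompactSpace (Quotient (MulAction.orbitRel Γ (EuclideanSpace ℝ (Fin n)))))
    (S : EReal)
    (v : ℝ → EuclideanSpace ℝ (Fin n) → ℝ)
    (hcont : ContinuousOn (fun p : ℝ × EuclideanSpace ℝ (Fin n) => v p.1 p.2)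
      {p : ℝ × EuclideanSpace ℝ (Fin n) | 0 ≤ p.1 ∧ (p.1 : EReal) < S})
    (hsmooth : ContDiffOn ℝ (⊤ : ℕ∞) (fun p : ℝ × EuclideanSpace ℝ (Fin n) => v p.1 p.2)
      {p : ℝ × EuclideanSpace ℝ (Fin n) | 0 < p.1 ∧ (p.1 : EReal) < S})
    (hpos : ∀ s : ℝ, 0 ≤ s → (s : EReal) < S → ∀ x, 0 < v s x)
    (hper : ∀ s : ℝ, 0 ≤ s → (s : EReal) < S → ∀ g : Γ, ∀ x, v s (g • x) = v s x)
    (hpde : ∀ s : ℝ, 0 < s → (s : EReal) < S → ∀ x,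
      deriv (fun t => v t x) s =
        lap (v s) x / (v s x) ^ 2 - 2 * ‖gradient (v s) x‖ ^ 2 / (v s x) ^ 3) :
    ∀ s : ℝ, 0 ≤ s → (s : EReal) < S → ∀ x,
      (0 < ⨅ y, v 0 y) ∧ ((⨅ y, v 0 y) ≤ v s x) ∧ (v s x ≤ ⨆ y, v 0 y) := by
  intro s hs hsS x
  have hlt : ∀ t ∈ Icc 0 s, (t : EReal) < S := fun t ht =>
    (EReal.coe_le_coe_iff.2 ht.2).trans_lt hsS
  have hinner : ∀ t ∈ Ioc 0 s, 0 < t ∧ (t : EReal) < S := fun t ht =>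
    ⟨ht.1, hlt t (Ioc_subset_Icc_self ht)⟩
  have h0S : ((0 : ℝ) : EReal) < S := hlt 0 (left_mem_Icc.2 hs)
  have := hΓ
  have hinv : ∀ t ∈ Icc 0 s, ∀ (g : Γ) x, v t (g • x) = v t x := fun t ht => hper t ht.1 (hlt t ht)
  have hcontT : ContinuousOn (fun p => v p.1 p.2) (Icc 0 s ×ˢ univ) :=
    hcont.mono fun p hp => ⟨hp.1.1, hlt _ hp.1⟩
  have hrange : IsCompact (range (v 0)) := MulAction.isCompact_range_of_smul_invariant
    (hcont.comp_continuous (continuous_const.prodMk continuous_id) fun _ => ⟨le_rfl, h0S⟩)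
    (hper 0 le_rfl h0S)
  have hOpen : IsOpen {p : ℝ × EuclideanSpace ℝ (Fin n) | 0 < p.1 ∧ (p.1 : EReal) < S} :=
    (isOpen_lt continuous_const continuous_fst).inter
      (isOpen_lt (continuous_coe_real_ereal.comp continuous_fst) continuous_const)
  have hslice : ∀ t ∈ Ioc 0 s, ContDiff ℝ 2 (v t) := fun t ht =>
    (hsmooth.contDiff_comp_mk_left fun _ => hinner t ht).of_le (by norm_cast)
  have hdiff : ∀ t ∈ Ioc 0 s, ∀ x, DifferentiableAt ℝ (fun t => v t x) t := fun t ht x =>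
    hsmooth.differentiableAt_comp_mk_right (by simp) (hOpen.mem_nhds (hinner t ht))
  obtain ⟨xmin, hxmin⟩ := hrange.sInf_mem (range_nonempty _)
  refine ⟨show 0 < sInf (range (v 0)) from hxmin ▸ hpos 0 le_rfl h0S xmin, ?_, ?_⟩
  · refine le_of_deriv_nonneg_at_spatial_min hcontT hinv hdiff (fun t ht y hy => ?_)
      (ciInf_le hrange.bddBelow) hs x
    rw [hpde t (hinner t ht).1 (hinner t ht).2 y]
    exact IsLocalMin.divInvSqGrad_nonneg (Eventually.of_forall hy) (hslice t ht)
  · refine le_of_deriv_nonpos_at_spatial_max hcontT hinv hdiff (fun t ht y hy => ?_)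
      (le_ciSup hrange.bddAbove) hs x
    rw [hpde t (hinner t ht).1 (hinner t ht).2 y]
    exact IsLocalMax.divInvSqGrad_nonpos (Eventually.of_forall hy) (hslice t ht)
      (hpos t ht.1.le (hinner t ht).2 y)

/-- A priori bounds used in the proof of Theorem 3.1: a positive periodic solution of
`∂v/∂s = v⁻² Δv − 2 v⁻³ |∇v|²` on `[0,S) × ℝⁿ` stays between the (positive) infimum
and the supremum of its initial data. -/
theorem a_priori_bounds (n : ℕ) (hn : 1 ≤ n)
    (Γ : Subgroup (EuclideanSpace ℝ (Fin n) ≃ᵢ EuclideanSpace ℝ (Fin n)))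
    (hΓ : CompactSpace (Quotient (MulAction.orbitRel Γ (EuclideanSpace ℝ (Fin n)))))
    (S : EReal) (hS : 0 < S)
    (v : ℝ → EuclideanSpace ℝ (Fin n) → ℝ)
    (hcont : ContinuousOn (fun p : ℝ × EuclideanSpace ℝ (Fin n) => v p.1 p.2)
      {p : ℝ × EuclideanSpace ℝ (Fin n) | 0 ≤ p.1 ∧ (p.1 : EReal) < S})
    (hsmooth : ContDiffOn ℝ (⊤ : ℕ∞) (fun p : ℝ × EuclideanSpace ℝ (Fin n) => v p.1 p.2)
      {p : ℝ × EuclideanSpace ℝ (Fin n) | 0 < p.1 ∧ (p.1 : EReal) < S})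
    (hpos : ∀ s : ℝ, 0 ≤ s → (s : EReal) < S → ∀ x, 0 < v s x)
    (hper : ∀ s : ℝ, 0 ≤ s → (s : EReal) < S → ∀ g : Γ, ∀ x, v s (g • x) = v s x)
    (hpde : ∀ s : ℝ, 0 < s → (s : EReal) < S → ∀ x,
      deriv (fun t => v t x) s =
        lap (v s) x / (v s x) ^ 2 - 2 * ‖gradient (v s) x‖ ^ 2 / (v s x) ^ 3) :
    ∀ s : ℝ, 0 ≤ s → (s : EReal) < S → ∀ x,
      (0 < ⨅ y, v 0 y) ∧ ((⨅ y, v 0 y) ≤ v s x) ∧ (v s x ≤ ⨆ y, v 0 y) :=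
  a_priori_bounds_general n Γ hΓ S v hcont hsmooth hpos hper hpde
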